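/- Let a, b, c, d ∈ R = ℂ[s,t,u] be homogeneous of degree n ≥ 1 with gcd(a,b,c,d) = 1, let I = ⟨a,b,c,d⟩, and suppose Syz(a,b,c,d) is a free R-module with a basis of homogeneous syzygies (a strong μ-basis). Then there exists D such that for all d ≥ D, the ℂ-dimension of the degree-d graded piece of R/I satisfies 3·dim_ℂ (R/I)_d ≥ 2n². (Since this dimension counts the basepoints of the parametrization with multiplicity, parametrizations with a strong μ-basis have at least 2n²/3 basepoints.) -/

import Mathlib

open MvPolynomial Module


lemma degree_eq_sum_id (f : Fin 3 →₀ ℕ) : Finsupp.degree f = f.sum fun _ => id := by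
  simp [Finsupp.degree, Finsupp.sum]
  rfl

noncomputable def degreeSetEquiv (k : ℕ) :
    {d : Fin 3 →₀ ℕ // d.degree = k} ≃ Sym (Fin 3) k where
  toFun d := ⟨Finsupp.toMultiset d.1, by
    rw [Finsupp.card_toMultiset, ← degree_eq_sum_id]; exact d.2⟩
  invFun m := ⟨Multiset.toFinsupp m.1, by
    rw [degree_eq_sum_id, Multiset.toFinsupp_sum_eq]; exact m.2⟩
  left_inv d := by ext : 1; simp
  right_inv m := by ext : 1; simp

noncomputable instance (k : ℕ) : Fintype {d : Fin 3 →₀ ℕ // d.degree = k} :=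
  Fintype.ofEquiv _ (degreeSetEquiv k).symm

lemma card_degreeSet (k : ℕ) :
    Fintype.card {d : Fin 3 →₀ ℕ // d.degree = k} = (k + 2).choose 2 := by
  rw [Fintype.card_congr (degreeSetEquiv k), Sym.card_sym_eq_choose]
  have h3 : Fintype.card (Fin 3) = 3 := by simp
  rw [h3]
  have : 3 + k - 1 = k + 2 := by omega
  rw [this, ← Nat.choose_symm (by omega : k ≤ k + 2)]
  congr 1
  omega

noncomputable def homBasis (k : ℕ) :
    Basis {d : Fin 3 →₀ ℕ // d.degree = k} ℂ (homogeneousSubmodule (Fin 3) ℂ k) :=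
  (basisRestrictSupport ℂ {d | d.degree = k}).map
    (LinearEquiv.ofEq _ _ (homogeneousSubmodule_eq_finsupp_supported (Fin 3) ℂ k).symm)

instance homFD (k : ℕ) : FiniteDimensional ℂ (homogeneousSubmodule (Fin 3) ℂ k) :=
  Module.Finite.of_basis (homBasis k)

lemma finrank_hom (k : ℕ) :
    2 * finrank ℂ (homogeneousSubmodule (Fin 3) ℂ k) = (k + 1) * (k + 2) := by
  rw [finrank_eq_card_basis (homBasis k), card_degreeSet, Nat.choose_two_right]
  have e : k + 2 - 1 = k + 1 := rfl
  rw [e, Nat.mul_div_cancel' ?_]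
  · ring
  · have e2 : (k + 2) * (k + 1) = (k + 1) * (k + 1 + 1) := by ring
    rw [e2]; exact (Nat.even_mul_succ_self (k + 1)).two_dvd

lemma homComp_mul {n : ℕ} {g : MvPolynomial (Fin 3) ℂ} (hg : g.IsHomogeneous n)
    (k : ℕ) (q : MvPolynomial (Fin 3) ℂ) :
    homogeneousComponent (k + n) (q * g) = homogeneousComponent k q * g := by
  induction q using MvPolynomial.induction_on' with
  | monomial u c =>
    rw [homogeneousComponent_of_mem
      (((isHomogeneous_monomial c rfl).mul hg :
        ((monomial u c : MvPolynomial (Fin 3) ℂ) * g).IsHomogeneous (u.degree + n)))]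
    rw [homogeneousComponent_of_mem
      ((isHomogeneous_monomial c rfl :
        (monomial u c : MvPolynomial (Fin 3) ℂ).IsHomogeneous u.degree))]
    by_cases h : k = u.degree
    · rw [if_pos (by omega), if_pos h]
    · rw [if_neg (by omega), if_neg h, zero_mul]
  | add p q hp hq => rw [add_mul, map_add, map_add, hp, hq, add_mul]

/-- The syzygy module `Syz(a,b,c,d) = {(A,B,C,D) ∈ R⁴ : Aa + Bb + Cc + Dd = 0}`
as an `R`-submodule of `R⁴`, `R = ℂ[s,t,u]`. -/
noncomputable def syzygyModule (a b c d : MvPolynomial (Fin 3) ℂ) :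
    Submodule (MvPolynomial (Fin 3) ℂ) (Fin 4 → MvPolynomial (Fin 3) ℂ) where
  carrier := {A | A 0 * a + A 1 * b + A 2 * c + A 3 * d = 0}
  add_mem' := by
    intro A B hA hB
    simp only [Set.mem_setOf_eq, Pi.add_apply] at *
    linear_combination hA + hB
  zero_mem' := by simp
  smul_mem' := by
    intro r A hA
    simp only [Set.mem_setOf_eq, Pi.smul_apply, smul_eq_mul] at *
    linear_combination r * hA

set_option maxHeartbeats 1000000 in
/-- If `Syz(a,b,c,d)` is free with a basis of homogeneous syzygies
(a strong μ-basis), then for all sufficiently large `d`, the dimension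
`dim R_d − dim I_d` of the degree-`d` graded piece of `R/I` satisfies
`3·dim (R/I)_d ≥ 2n²`: parametrizations with a strong μ-basis have at least `2n²/3`
basepoints, counted with multiplicity. -/
theorem strong_mu_basis_many_basepoints (n : ℕ) (hn : 1 ≤ n)
    (a b c d : MvPolynomial (Fin 3) ℂ)
    (ha : a.IsHomogeneous n) (hb : b.IsHomogeneous n)
    (hc : c.IsHomogeneous n) (hd : d.IsHomogeneous n)
    (hgcd : ∀ g : MvPolynomial (Fin 3) ℂ, g ∣ a → g ∣ b → g ∣ c → g ∣ d → IsUnit g)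
    (μ : Fin 3 → ℕ) (p : Fin 3 → (Fin 4 → MvPolynomial (Fin 3) ℂ))
    (hpmem : ∀ i, p i ∈ syzygyModule a b c d)
    (hphom : ∀ i j, (p i j).IsHomogeneous (μ i))
    (hpbasis : ∀ A : Fin 4 → MvPolynomial (Fin 3) ℂ, A ∈ syzygyModule a b c d →
      ∃! h : Fin 3 → MvPolynomial (Fin 3) ℂ, A = ∑ i, h i • p i) :
    ∃ D : ℕ, ∀ d' : ℕ, D ≤ d' →
      2 * n ^ 2 ≤
        3 * (Module.finrank ℂ (homogeneousSubmodule (Fin 3) ℂ d') -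
          Module.finrank ℂ
            ((Ideal.span {a, b, c, d} :
                Ideal (MvPolynomial (Fin 3) ℂ)).restrictScalars ℂ ⊓
              homogeneousSubmodule (Fin 3) ℂ d' :
              Submodule ℂ (MvPolynomial (Fin 3) ℂ))) := by
  classical
  set g : Fin 4 → MvPolynomial (Fin 3) ℂ := ![a, b, c, d] with hgdef
  have hghom : ∀ j, (g j).IsHomogeneous n := by
    intro j
    fin_cases j
    · exact ha
    · exact hb
    · exact hc
    · exact hd
  have hset : ({a, b, c, d} : Set (MvPolynomial (Fin 3) ℂ)) = Set.range g := by
    ext x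
    simp only [hgdef, Set.mem_insert_iff, Set.mem_singleton_iff, Set.mem_range]
    constructor
    · rintro (rfl | rfl | rfl | rfl)
      exacts [⟨0, rfl⟩, ⟨1, rfl⟩, ⟨2, rfl⟩, ⟨3, rfl⟩]
    · rintro ⟨j, rfl⟩
      fin_cases j <;> simp
  -- the syzygy identity for the basis elements
  have hsyz : ∀ i, ∑ j, p i j * g j = 0 := by
    intro i
    have h0 : p i 0 * a + p i 1 * b + p i 2 * c + p i 3 * d = 0 := hpmem i
    rw [Fin.sum_univ_four]
    simpa [hgdef] using h0
  obtain ⟨M, hM⟩ : ∃ m : ℕ, m = μ 0 + μ 1 + μ 2 := ⟨_, rfl⟩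
  have hμM : ∀ i, μ i ≤ M := by
    intro i
    fin_cases i
    · show μ 0 ≤ M; omega
    · show μ 1 ≤ M; omega
    · show μ 2 ≤ M; omega
  have hMz : (M : ℤ) = (μ 0 : ℤ) + (μ 1 : ℤ) + (μ 2 : ℤ) := by
    rw [hM]; push_cast; ring
  set f : ℕ → ℕ := fun k => finrank ℂ (homogeneousSubmodule (Fin 3) ℂ k) with hf
  -- the rank computation from the exact sequence
  have hrank : ∀ q : ℕ, M ≤ q →
      finrank ℂ ((Ideal.span {a, b, c, d}).restrictScalars ℂ ⊓
          homogeneousSubmodule (Fin 3) ℂ (n + q) :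
            Submodule ℂ (MvPolynomial (Fin 3) ℂ)) + ∑ i, f (q - μ i) = 4 * f q := by
    intro q hq
    have hμq : ∀ i : Fin 3, μ i ≤ q := fun i => le_trans (hμM i) hq
    -- the multiplication map
    set Φ : (Fin 4 → homogeneousSubmodule (Fin 3) ℂ q) →ₗ[ℂ] MvPolynomial (Fin 3) ℂ :=
      { toFun := fun A => ∑ j, (A j : MvPolynomial (Fin 3) ℂ) * g j
        map_add' := by
          intro A B
          simp only [Pi.add_apply, Submodule.coe_add, add_mul]
          rw [Finset.sum_add_distrib]
        map_smul' := by
          intro r A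
          simp only [Pi.smul_apply, SetLike.val_smul, smul_mul_assoc, RingHom.id_apply]
          rw [Finset.smul_sum] } with hΦ
    have hΦcoe : ∀ A, Φ A = ∑ j, (A j : MvPolynomial (Fin 3) ℂ) * g j := fun A => rfl
    have hrange : LinearMap.range Φ =
        (Ideal.span {a, b, c, d}).restrictScalars ℂ ⊓
          homogeneousSubmodule (Fin 3) ℂ (n + q) := by
      apply le_antisymm
      · rintro x ⟨A, rfl⟩
        rw [hΦcoe]
        refine Submodule.mem_inf.mpr ⟨?_, ?_⟩
        · rw [Submodule.restrictScalars_mem, hset]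
          exact Ideal.sum_mem _ fun j _ =>
            Ideal.mul_mem_left _ _ (Ideal.subset_span ⟨j, rfl⟩)
        · refine Submodule.sum_mem _ fun j _ => ?_
          rw [mem_homogeneousSubmodule]
          have := ((A j).2 : (A j : MvPolynomial (Fin 3) ℂ).IsHomogeneous q).mul (hghom j)
          rwa [Nat.add_comm q n] at this
      · rintro x hx
        obtain ⟨hxI, hxS⟩ := Submodule.mem_inf.mp hx
        rw [Submodule.restrictScalars_mem, hset] at hxI
        obtain ⟨cf, hcf⟩ := Ideal.mem_span_range_iff_exists_fun.mp hxI
        refine LinearMap.mem_range.mpr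
          ⟨fun j => (⟨homogeneousComponent q (cf j), homogeneousComponent_mem q (cf j)⟩ :
            homogeneousSubmodule (Fin 3) ℂ q), ?_⟩
        rw [hΦcoe]
        have e : ∀ j : Fin 4, (((⟨homogeneousComponent q (cf j),
            homogeneousComponent_mem q (cf j)⟩ :
            homogeneousSubmodule (Fin 3) ℂ q)) : MvPolynomial (Fin 3) ℂ) * g j
            = homogeneousComponent (q + n) (cf j * g j) := fun j =>
          (homComp_mul (hghom j) q (cf j)).symm
        rw [Finset.sum_congr rfl fun j _ => e j, ← map_sum, hcf,
          homogeneousComponent_of_mem hxS, if_pos (by omega)]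
    -- the syzygy map
    set Ψ : (∀ i : Fin 3, homogeneousSubmodule (Fin 3) ℂ (q - μ i)) →ₗ[ℂ]
        (Fin 4 → homogeneousSubmodule (Fin 3) ℂ q) :=
      { toFun := fun h j => ⟨∑ i, (h i : MvPolynomial (Fin 3) ℂ) * p i j, by
          refine Submodule.sum_mem _ fun i _ => ?_
          rw [mem_homogeneousSubmodule]
          have := ((h i).2 : (h i : MvPolynomial (Fin 3) ℂ).IsHomogeneous (q - μ i)).mul
            (hphom i j)
          rwa [Nat.sub_add_cancel (hμq i)] at this⟩
        map_add' := by
          intro h1 h2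
          funext j
          apply Subtype.ext
          simp only [Pi.add_apply, Submodule.coe_add, add_mul]
          rw [Finset.sum_add_distrib]
        map_smul' := by
          intro r h
          funext j
          apply Subtype.ext
          simp only [Pi.smul_apply, SetLike.val_smul, smul_mul_assoc, RingHom.id_apply]
          rw [Finset.smul_sum] } with hΨ
    have hΨcoe : ∀ h j, ((Ψ h) j : MvPolynomial (Fin 3) ℂ)
        = ∑ i, (h i : MvPolynomial (Fin 3) ℂ) * p i j := fun h j => rfl
    have hΨzero : ∀ h, Ψ h = 0 → h = 0 := by
      intro h hh
      have hz0 : ∀ j, ∑ i, (h i : MvPolynomial (Fin 3) ℂ) * p i j = 0 := by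
        intro j
        simpa [hΨcoe] using congrArg Subtype.val (congrFun hh j)
      have hz : (fun i => (h i : MvPolynomial (Fin 3) ℂ)) = 0 := by
        obtain ⟨h₀, -, huniq⟩ := hpbasis 0 (Submodule.zero_mem _)
        have e1 : (0 : Fin 4 → MvPolynomial (Fin 3) ℂ)
            = ∑ i, (fun i => (h i : MvPolynomial (Fin 3) ℂ)) i • p i := by
          funext j
          simp only [Finset.sum_apply, Pi.smul_apply, smul_eq_mul, Pi.zero_apply]
          exact (hz0 j).symm
        have e2 : (0 : Fin 4 → MvPolynomial (Fin 3) ℂ)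
            = ∑ i, (0 : Fin 3 → MvPolynomial (Fin 3) ℂ) i • p i := by simp
        exact (huniq _ e1).trans (huniq 0 e2).symm
      funext i
      exact Subtype.ext (congrFun hz i)
    have hΨinj : Function.Injective Ψ := by
      intro h1 h2 he
      have := hΨzero (h1 - h2) (by rw [map_sub, he, sub_self])
      rwa [sub_eq_zero] at this
    have hker : LinearMap.range Ψ = LinearMap.ker Φ := by
      apply le_antisymm
      · rintro A ⟨h, rfl⟩
        rw [LinearMap.mem_ker, hΦcoe]
        calc ∑ j, ((Ψ h) j : MvPolynomial (Fin 3) ℂ) * g j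
            = ∑ j, ∑ i, (h i : MvPolynomial (Fin 3) ℂ) * (p i j * g j) := by
              refine Finset.sum_congr rfl fun j _ => ?_
              rw [hΨcoe, Finset.sum_mul]
              exact Finset.sum_congr rfl fun i _ => (mul_assoc _ _ _)
          _ = ∑ i, (h i : MvPolynomial (Fin 3) ℂ) * ∑ j, p i j * g j := by
              rw [Finset.sum_comm]
              exact Finset.sum_congr rfl fun i _ => (Finset.mul_sum _ _ _).symm
          _ = 0 := by simp [hsyz]
      · rintro A hA
        rw [LinearMap.mem_ker, hΦcoe] at hA
        have hAmem : (fun j => (A j : MvPolynomial (Fin 3) ℂ)) ∈ syzygyModule a b c d := by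
          show (A 0 : MvPolynomial (Fin 3) ℂ) * a + (A 1 : MvPolynomial (Fin 3) ℂ) * b
            + (A 2 : MvPolynomial (Fin 3) ℂ) * c + (A 3 : MvPolynomial (Fin 3) ℂ) * d = 0
          rw [Fin.sum_univ_four] at hA
          simpa [hgdef] using hA
        obtain ⟨h, hh, -⟩ := hpbasis _ hAmem
        refine LinearMap.mem_range.mpr ⟨fun i =>
          (⟨homogeneousComponent (q - μ i) (h i), homogeneousComponent_mem _ _⟩ :
            homogeneousSubmodule (Fin 3) ℂ (q - μ i)), ?_⟩
        funext j
        apply Subtype.ext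
        rw [hΨcoe]
        have hAj : ∀ i : Fin 3, (((⟨homogeneousComponent (q - μ i) (h i),
            homogeneousComponent_mem _ _⟩ :
            homogeneousSubmodule (Fin 3) ℂ (q - μ i))) : MvPolynomial (Fin 3) ℂ) * p i j
            = homogeneousComponent q (h i * p i j) := by
          intro i
          show homogeneousComponent (q - μ i) (h i) * p i j = _
          rw [← homComp_mul (hphom i j) (q - μ i) (h i), Nat.sub_add_cancel (hμq i)]
        rw [Finset.sum_congr rfl fun i _ => hAj i, ← map_sum]
        have hAsum : (A j : MvPolynomial (Fin 3) ℂ) = ∑ i, h i * p i j := by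
          have := congrFun hh j
          simpa [Finset.sum_apply] using this
        rw [← hAsum, homogeneousComponent_of_mem (A j).2, if_pos rfl]
    -- rank-nullity
    have hrn := LinearMap.finrank_range_add_finrank_ker Φ
    rw [hrange, ← hker, LinearMap.finrank_range_of_inj hΨinj] at hrn
    rw [Module.finrank_pi_fintype ℂ, Module.finrank_pi_fintype ℂ] at hrn
    have e4 : ∑ _j : Fin 4, finrank ℂ (homogeneousSubmodule (Fin 3) ℂ q) = 4 * f q := by
      simp [hf, Finset.sum_const, mul_comm]
    rw [e4] at hrn
    rw [← hrn]
  -- dimension of the ideal piece is at most the dimension of the whole piece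
  have hle : ∀ k : ℕ, finrank ℂ ((Ideal.span {a, b, c, d}).restrictScalars ℂ ⊓
      homogeneousSubmodule (Fin 3) ℂ k : Submodule ℂ (MvPolynomial (Fin 3) ℂ)) ≤ f k :=
    fun k => Submodule.finrank_mono inf_le_right
  have hfF : ∀ k, 2 * f k = (k + 1) * (k + 2) := fun k => finrank_hom k
  -- M ≤ n
  have hMn : M ≤ n := by
    by_contra hM'
    push_neg at hM'
    obtain ⟨q, hqdef⟩ : ∃ q : ℕ, q = n * n + 3 * n + M * M + 5 := ⟨_, rfl⟩
    have hMq : M ≤ q := by nlinarith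
    have h1 := hrank q hMq
    have h2 := hle (n + q)
    have hsum : ∑ i, f (q - μ i) = f (q - μ 0) + f (q - μ 1) + f (q - μ 2) := by
      rw [Fin.sum_univ_three]
    rw [hsum] at h1
    have key : 4 * (2 * f q) ≤ 2 * f (n + q) + (2 * f (q - μ 0) + 2 * f (q - μ 1)
        + 2 * f (q - μ 2)) := by omega
    rw [hfF, hfF, hfF, hfF, hfF] at key
    have hqz : (q : ℤ) = (n : ℤ) * n + 3 * n + (M : ℤ) * M + 5 := by
      rw [hqdef]; push_cast; ring
    zify [le_trans (hμM 0) hMq, le_trans (hμM 1) hMq, le_trans (hμM 2) hMq] at key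
    have hM'z : (n : ℤ) + 1 ≤ (M : ℤ) := by exact_mod_cast hM'
    nlinarith [key, hqz, hMz, hM'z,
      mul_nonneg (mul_nonneg (by positivity : (0:ℤ) ≤ 2) (by positivity : (0:ℤ) ≤ (q:ℤ)))
        (by linarith : (0:ℤ) ≤ (M:ℤ) - n - 1),
      mul_nonneg (by positivity : (0:ℤ) ≤ (μ 0 : ℤ)) (by positivity : (0:ℤ) ≤ (μ 1 : ℤ)),
      mul_nonneg (by positivity : (0:ℤ) ≤ (μ 0 : ℤ)) (by positivity : (0:ℤ) ≤ (μ 2 : ℤ)),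
      mul_nonneg (by positivity : (0:ℤ) ≤ (μ 1 : ℤ)) (by positivity : (0:ℤ) ≤ (μ 2 : ℤ))]
  -- final estimate
  refine ⟨2 * n + M + 5, ?_⟩
  intro d' hd'
  have hd'e : d' = n + (d' - n) := by omega
  rw [hd'e]
  set q : ℕ := d' - n with hq
  have hMq : M ≤ q := by omega
  have h1 := hrank q hMq
  have h2 := hle (n + q)
  have hsum : ∑ i, f (q - μ i) = f (q - μ 0) + f (q - μ 1) + f (q - μ 2) := by
    rw [Fin.sum_univ_three]
  rw [hsum] at h1
  set r : ℕ := finrank ℂ ((Ideal.span {a, b, c, d}).restrictScalars ℂ ⊓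
      homogeneousSubmodule (Fin 3) ℂ (n + q) : Submodule ℂ (MvPolynomial (Fin 3) ℂ)) with hr
  show 2 * n ^ 2 ≤ 3 * (f (n + q) - r)
  have goal2 : 2 * n ^ 2 + 3 * r ≤ 3 * f (n + q) := by
    have key : 2 * (2 * r) + 2 * (2 * f (q - μ 0) + 2 * f (q - μ 1) + 2 * f (q - μ 2))
        = 8 * (2 * f q) := by omega
    have hqn : n ≤ q := by omega
    have main : 4 * (2 * n ^ 2) + 6 * (2 * r) ≤ 6 * (2 * f (n + q)) := by
      rw [hfF] at key ⊢
      rw [hfF, hfF, hfF] at key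
      zify [le_trans (hμM 0) hMq, le_trans (hμM 1) hMq, le_trans (hμM 2) hMq] at key
      have hMnz : (M : ℤ) ≤ (n : ℤ) := by exact_mod_cast hMn
      have hqnz : (n : ℤ) ≤ (q : ℤ) := by exact_mod_cast hqn
      zify
      nlinarith [key, hMz, hMnz, hqnz,
        sq_nonneg ((μ 0 : ℤ) - μ 1), sq_nonneg ((μ 0 : ℤ) - μ 2),
        sq_nonneg ((μ 1 : ℤ) - μ 2),
        mul_nonneg (by linarith : (0:ℤ) ≤ (n:ℤ) - M)
          (by linarith : (0:ℤ) ≤ 12 * (q:ℤ) + 18 - 2 * (n:ℤ) - 2 * M)]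
    omega
  omega
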